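/- (Null-form pointwise estimates.) Let (F^{αβγ})_{α,β,γ=0,…,3} and (F^{αβ})_{α,β=0,…,3} be real constants satisfying the null condition, i.e. F^{αβγ}X_αX_βX_γ = 0 and F^{αβ}X_αX_β = 0 for every X∈ℝ⁴ with X_0²=X_1²+X_2²+X_3². Then there exists a constant C>0 such that for all smooth functions v, w₁, w₂, w on ℝ×ℝ³ and all (t,x) with x≠0: |F^{αβγ}(∂_γ w₁)(∂²_{αβ}w₂)| ≤ C(|Tw₁||∂²w₂| + |∂w₁||T∂w₂|), |F^{αβγ}(∂²_{αγ}w₁)(∂_β w₂)| ≤ C(|T∂w₁||∂w₂| + |∂²w₁||Tw₂|), and |F^{αβ}(∂_α v)(∂_β w)| ≤ C(|Tv||∂w| + |∂v||Tw|), where all expressions are evaluated at (t,x), summation is over repeated Greek indices, and |Tv|² = Σ_{k=1}^3 |T_k v|², |∂v|² = Σ_{α=0}^3 |∂_α v|², |T∂v|² = Σ_{k=1}^3 Σ_{γ=0}^3 |T_k∂_γ v|², |∂²v|² = Σ_{α,β=0}^3 |∂²_{αβ}v|². -/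

import Mathlib

open MeasureTheory Real

noncomputable section

/-- Scalar space-time functions on `ℝ_t × ℝ³_x`. -/
abbrev Fn : Type := ℝ → (Fin 3 → ℝ) → ℝ
abbrev Op : Type := Fn → Fn

/-- time derivative `∂_t` -/
def pt (v : Fn) : Fn := fun t x => deriv (fun s => v s x) t
/-- spatial partial derivative `∂_k` -/
def px (k : Fin 3) (v : Fn) : Fn := fun t x => fderiv ℝ (fun y => v t y) x (Pi.single k 1)
/-- `∂_α`, `α = 0,…,3`, with `∂_0 = ∂_t` -/
def pd : Fin 4 → Op := Fin.cons pt fun k => px k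
/-- d'Alembertian `□ = ∂_t² - Δ` -/
def Box (v : Fn) : Fn := fun t x => pt (pt v) t x - ∑ k, px k (px k v) t x

/-- Euclidean norm `r = |x|` on `ℝ³` -/
def enorm3 (x : Fin 3 → ℝ) : ℝ := Real.sqrt (∑ i, (x i) ^ 2)
/-- Japanese bracket `⟨s⟩ = (1+s²)^{1/2}` -/
def jb (s : ℝ) : ℝ := Real.sqrt (1 + s ^ 2)

/-- rotations `Ω_{ij} = x_i ∂_j - x_j ∂_i` -/
def Omg (i j : Fin 3) (v : Fn) : Fn := fun t x => x i * px j v t x - x j * px i v t x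
/-- hyperbolic rotations `L_k = x_k ∂_t + t ∂_k` -/
def Lk (k : Fin 3) (v : Fn) : Fn := fun t x => x k * pt v t x + t * px k v t x
/-- scaling field `S = t ∂_t + x·∇` -/
def Sop (v : Fn) : Fn := fun t x => t * pt v t x + ∑ i, x i * px i v t x
/-- good derivatives `T_k = ∂_k + (x_k/|x|) ∂_t` -/
def Tgood (k : Fin 3) (v : Fn) : Fn := fun t x => px k v t x + (x k / enorm3 x) * pt v t x

/-- multi-indices (components bounded by 4, enough for all statements) -/
abbrev MI : Type := Fin 3 → Fin 5
def deg (a : MI) : ℕ := ∑ i, (a i : ℕ)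
def pxPow (a : MI) : Op := (px 0)^[(a 0 : ℕ)] ∘ (px 1)^[(a 1 : ℕ)] ∘ (px 2)^[(a 2 : ℕ)]
def omgPow (b : MI) : Op := (Omg 0 1)^[(b 0 : ℕ)] ∘ (Omg 0 2)^[(b 1 : ℕ)] ∘ (Omg 1 2)^[(b 2 : ℕ)]
def lkPow (c : MI) : Op := (Lk 0)^[(c 0 : ℕ)] ∘ (Lk 1)^[(c 1 : ℕ)] ∘ (Lk 2)^[(c 2 : ℕ)]
/-- the monomial `∂_x^a Ω^b L^c S^d` -/
def Gmma (a b c : MI) (d : ℕ) : Op := fun v => pxPow a (omgPow b (lkPow c (Sop^[d] v)))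

/-- squared `L²(ℝ³)` norm -/
def sqL2 (f : (Fin 3 → ℝ) → ℝ) : ℝ := ∫ x, (f x) ^ 2
/-- `L²(ℝ³)` norm -/
def L2 (f : (Fin 3 → ℝ) → ℝ) : ℝ := Real.sqrt (sqL2 f)

/-- energy `E₁` -/
def E1 (v : Fn) (t : ℝ) : ℝ := (1/2) * ∫ x, ((pt v t x) ^ 2 + ∑ k, (px k v t x) ^ 2)

/-- `N_{m+1}(v(t))²` -/
def Nsq (m : ℕ) (v : Fn) (t : ℝ) : ℝ :=
  ∑ a : MI, ∑ b : MI, ∑ c : MI, ∑ d : Fin 5,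
    if deg a + deg b + deg c + (d : ℕ) ≤ m ∧ deg c + (d : ℕ) ≤ 1 then
      E1 (Gmma a b c d v) t else 0

/-- the quantity `Q̃(v(t))` -/
def Qt (v : Fn) (t : ℝ) : ℝ :=
  sqL2 (v t) + (∑ i : Fin 3, ∑ j : Fin 3, if i < j then sqL2 (Omg i j v t) else 0)
    + (∑ k : Fin 3, sqL2 (Lk k v t)) + sqL2 (Sop v t)

/-- `M_{m+1}(v(t))²` -/
def Msq (m : ℕ) (v : Fn) (t : ℝ) : ℝ :=
  ∑ a : MI, ∑ b : MI, if deg a + deg b ≤ m then Qt (pxPow a (omgPow b v)) t else 0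

/-- `X_m(v(t))²` -/
def Xsq (m : ℕ) (v : Fn) (t : ℝ) : ℝ :=
  ∑ b : MI, if deg b ≤ m then sqL2 (omgPow b v t) else 0

/-- ghost-weight quantity `G(v(t))²` -/
def Gsq (η : ℝ) (v : Fn) (t : ℝ) : ℝ :=
  ∑ k : Fin 3,
    ((∑ a : MI, ∑ b : MI, ∑ c : MI, ∑ d : Fin 5,
        if deg a + deg b + deg c + (d : ℕ) ≤ 3 ∧ deg c + (d : ℕ) ≤ 1 then
          sqL2 (fun x => jb (t - enorm3 x) ^ (-(1/2 : ℝ) - η) * Tgood k (Gmma a b c d v) t x)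
        else 0)
      + (∑ a : MI, ∑ b : MI, ∑ c : MI, ∑ d : Fin 5,
        if deg a + deg b + deg c + (d : ℕ) ≤ 2 ∧ deg c + (d : ℕ) ≤ 1 then
          sqL2 (fun x => jb (t - enorm3 x) ^ (-(1/2 : ℝ) - η) * Tgood k (pt (Gmma a b c d v)) t x)
        else 0))

/-- localized-energy quantity `L(v(t))²` -/
def Lsq (v : Fn) (t : ℝ) : ℝ :=
  ∑ a : MI, ∑ b : MI, ∑ c : MI, ∑ d : Fin 5,
    if deg a + deg b + deg c + (d : ℕ) ≤ 3 ∧ deg c + (d : ℕ) ≤ 1 then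
      sqL2 (fun x => enorm3 x ^ (-(5/4 : ℝ)) * Gmma a b c d v t x)
        + ∑ α : Fin 4, sqL2 (fun x => enorm3 x ^ (-(1/4 : ℝ)) * pd α (Gmma a b c d v) t x)
    else 0

variable {N : ℕ}

/-- vector-valued versions of the norms -/
def NV (m : ℕ) (u : Fin N → Fn) (t : ℝ) : ℝ := Real.sqrt (∑ i, Nsq m (u i) t)
def MV (m : ℕ) (u : Fin N → Fn) (t : ℝ) : ℝ := Real.sqrt (∑ i, Msq m (u i) t)
def XV (m : ℕ) (u : Fin N → Fn) (t : ℝ) : ℝ := Real.sqrt (∑ i, Xsq m (u i) t)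
def GV (η : ℝ) (u : Fin N → Fn) (t : ℝ) : ℝ := Real.sqrt (∑ i, Gsq η (u i) t)
def LsqV (u : Fin N → Fn) (t : ℝ) : ℝ := ∑ i, Lsq (u i) t

/-- purely spatial functions and fields -/
abbrev SFn : Type := (Fin 3 → ℝ) → ℝ
def sdx (k : Fin 3) (f : SFn) : SFn := fun x => fderiv ℝ f x (Pi.single k 1)
def sOmg (i j : Fin 3) (f : SFn) : SFn := fun x => x i * sdx j f x - x j * sdx i f x
/-- `Λ = x·∇` -/
def sLam (f : SFn) : SFn := fun x => ∑ i, x i * sdx i f x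
def sdxPow (a : MI) : SFn → SFn := (sdx 0)^[(a 0 : ℕ)] ∘ (sdx 1)^[(a 1 : ℕ)] ∘ (sdx 2)^[(a 2 : ℕ)]
def sOmgPow (b : MI) : SFn → SFn :=
  (sOmg 0 1)^[(b 0 : ℕ)] ∘ (sOmg 0 2)^[(b 1 : ℕ)] ∘ (sOmg 1 2)^[(b 2 : ℕ)]
/-- `‖∂_x f‖_{L²}` (gradient) -/
def gradL2 (f : SFn) : ℝ := Real.sqrt (∑ k : Fin 3, sqL2 (sdx k f))

/-- the weighted data norm `D(f,g)` -/
def Dfg (f g : Fin N → SFn) : ℝ :=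
  ∑ i,
    ((∑ a : MI, ∑ b : MI, if deg a + deg b ≤ 3 then
        gradL2 (sdxPow a (sOmgPow b (f i))) + L2 (sdxPow a (sOmgPow b (g i))) else 0)
    + (∑ a : MI, ∑ b : MI, if deg a + deg b ≤ 2 then
        gradL2 (sdxPow a (sOmgPow b (sLam (f i)))) + L2 (sdxPow a (sOmgPow b (sLam (g i)))) else 0)
    + L2 (f i)
    + (∑ b : MI, if deg b ≤ 2 then
        (∑ j : Fin 3, ∑ k : Fin 3, if j < k then L2 (sOmgPow b (sOmg j k (f i))) else 0)
          + L2 (sOmgPow b (sLam (f i)))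
          + L2 (fun x => enorm3 x * sOmgPow b (g i) x) else 0))

/-- variables `(u, ∂u)` of the cubic nonlinearities -/
abbrev PolyVar (N : ℕ) := Sum (Fin N) (Fin N × Fin 4)
def uVars (u : Fin N → Fn) (t : ℝ) (x : Fin 3 → ℝ) : PolyVar N → ℝ :=
  Sum.elim (fun j => u j t x) fun p => pd p.2 (u p.1) t x

/-- null condition for cubic (quasilinear) coefficients -/
def NullC3 (F : Fin 4 → Fin 4 → Fin 4 → ℝ) : Prop :=
  ∀ X : Fin 4 → ℝ, X 0 ^ 2 = X 1 ^ 2 + X 2 ^ 2 + X 3 ^ 2 →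
    (∑ α, ∑ β, ∑ γ, F α β γ * X α * X β * X γ) = 0

/-- null condition for quadratic (semilinear) coefficients -/
def NullC2 (F : Fin 4 → Fin 4 → ℝ) : Prop :=
  ∀ X : Fin 4 → ℝ, X 0 ^ 2 = X 1 ^ 2 + X 2 ^ 2 + X 3 ^ 2 →
    (∑ α, ∑ β, F α β * X α * X β) = 0

/-- a quasi-linear system of wave equations satisfying the null condition -/
structure NullSystem (N : ℕ) where
  Fc : Fin N → Fin N → Fin 4 → Fin 4 → Fin 4 → ℝ
  Fq : Fin N → Fin N → Fin N → Fin 4 → Fin 4 → ℝ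
  Gp : Fin N → Fin 4 → Fin 4 → MvPolynomial (PolyVar N) ℝ
  Hp : Fin N → MvPolynomial (PolyVar N) ℝ
  Fc_symm : ∀ i j α β γ, Fc i j α β γ = Fc i j β α γ
  Gp_symm : ∀ i α β, Gp i α β = Gp i β α
  Gp_hom : ∀ i α β, (Gp i α β).IsHomogeneous 2
  Hp_hom : ∀ i, (Hp i).IsHomogeneous 3
  null3 : ∀ i j, NullC3 (Fc i j)
  null2 : ∀ i j k, NullC2 (Fq i j k)

/-- left-hand side `□u_i + F_i(∂u,∂²u) + C_i(u,∂u,∂²u)` -/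
def eqnLHS (𝒮 : NullSystem N) (u : Fin N → Fn) (i : Fin N) : Fn := fun t x =>
  Box (u i) t x
  + (∑ j, ∑ α, ∑ β, ∑ γ, 𝒮.Fc i j α β γ * pd γ (u j) t x * pd α (pd β (u i)) t x)
  + (∑ j, ∑ k, ∑ α, ∑ β, 𝒮.Fq i j k α β * pd α (u j) t x * pd β (u k) t x)
  + (∑ α, ∑ β, MvPolynomial.eval (uVars u t x) (𝒮.Gp i α β) * pd α (pd β (u i)) t x)
  + MvPolynomial.eval (uVars u t x) (𝒮.Hp i)

/-- global classical solution of the Cauchy problem -/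
def IsGlobalSolution (𝒮 : NullSystem N) (f g : Fin N → SFn) (u : Fin N → Fn) : Prop :=
  (∀ i, ContDiff ℝ 2 (Function.uncurry (u i)))
  ∧ (∀ i, ∀ t > (0 : ℝ), ∀ x, eqnLHS 𝒮 u i t x = 0)
  ∧ (∀ i x, u i 0 x = f i x) ∧ (∀ i x, pt (u i) 0 x = g i x)

/-- smooth solution on a time slab `[0,T)` -/
def IsSmoothSolutionOn (𝒮 : NullSystem N) (f g : Fin N → SFn) (u : Fin N → Fn) (T : ℝ) : Prop :=
  (∀ i, ContDiff ℝ (⊤ : ℕ∞) (Function.uncurry (u i)))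
  ∧ (∀ i, ∀ t, 0 < t → t < T → ∀ x, eqnLHS 𝒮 u i t x = 0)
  ∧ (∀ i x, u i 0 x = f i x) ∧ (∀ i x, pt (u i) 0 x = g i x)

/-- `L^∞(ℝ³)` norm at time `t` -/
def Linf (v : Fn) (t : ℝ) : ℝ := ⨆ x, |v t x|
/-- `L^∞` norm of the full space-time gradient at time `t` -/
def LinfD (v : Fn) (t : ℝ) : ℝ := ⨆ x, Real.sqrt (∑ α : Fin 4, (pd α v t x) ^ 2)

/-- the pointwise bootstrap quantity `⟨⟨u(t)⟩⟩` -/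
def bra (δ : ℝ) (u : Fin N → Fn) (t : ℝ) : ℝ :=
  ∑ i,
    ((∑ a : MI, ∑ b : MI, if deg a + deg b ≤ 1 then
        jb t * LinfD (pxPow a (omgPow b (u i))) t else 0)
    + (∑ k : Fin 3, LinfD (Lk k (u i)) t) + LinfD (Sop (u i)) t
    + (∑ b : MI, if deg b ≤ 1 then jb t ^ (1 - δ) * Linf (omgPow b (u i)) t else 0)
    + (∑ b : MI, if deg b = 2 then Linf (omgPow b (u i)) t else 0)
    + (∑ b : MI, if deg b ≤ 1 then
        jb t ^ (-δ) * ((∑ k : Fin 3, Linf (omgPow b (Lk k (u i))) t)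
          + Linf (omgPow b (Sop (u i))) t) else 0))


/-- pointwise norm of the good derivatives `(Σ_k |T_k v|²)^{1/2}` -/
def Tnorm (v : Fn) (t : ℝ) (x : Fin 3 → ℝ) : ℝ := Real.sqrt (∑ k : Fin 3, (Tgood k v t x) ^ 2)
/-- pointwise norm `|∂v|` -/
def Dnorm (v : Fn) (t : ℝ) (x : Fin 3 → ℝ) : ℝ := Real.sqrt (∑ α : Fin 4, (pd α v t x) ^ 2)
/-- pointwise norm `|T∂v|` -/
def TDnorm (v : Fn) (t : ℝ) (x : Fin 3 → ℝ) : ℝ :=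
  Real.sqrt (∑ k : Fin 3, ∑ γ : Fin 4, (Tgood k (pd γ v) t x) ^ 2)
/-- pointwise norm `|∂²v|` -/
def D2norm (v : Fn) (t : ℝ) (x : Fin 3 → ℝ) : ℝ :=
  Real.sqrt (∑ α : Fin 4, ∑ β : Fin 4, (pd α (pd β v) t x) ^ 2)


/-! ### Auxiliary lemmas for the null-form pointwise estimates -/

section NullFormAux

/-- basis directions in space-time -/
def Evec : Fin 4 → ℝ × (Fin 3 → ℝ) := Fin.cons (1, 0) (fun a => (0, Pi.single a 1))

lemma pd_eq_fderiv (v : Fn) (hv : ContDiff ℝ (⊤ : ℕ∞) (Function.uncurry v)) (α : Fin 4)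
    (t : ℝ) (x : Fin 3 → ℝ) :
    pd α v t x = fderiv ℝ (Function.uncurry v) (t, x) (Evec α) := by
  have hW := hv.differentiable (by simp)
  induction α using Fin.cases with
  | zero =>
      have h1 : HasDerivAt (fun s : ℝ => (s, x)) ((1:ℝ), (0 : Fin 3 → ℝ)) t :=
        (hasDerivAt_id t).prodMk (hasDerivAt_const t x)
      have h2 := (hW (t, x)).hasFDerivAt.comp_hasDerivAt t h1
      simpa [pd, pt, Evec, Function.uncurry, Function.comp_def] using h2.deriv
  | succ k =>
      have h1 : HasFDerivAt (fun y : Fin 3 → ℝ => (t, y))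
          (ContinuousLinearMap.inr ℝ ℝ (Fin 3 → ℝ)) x :=
        (hasFDerivAt_const t x).prodMk (hasFDerivAt_id x)
      have h2 := (hW (t, x)).hasFDerivAt.comp x h1
      have := h2.fderiv
      simp only [pd, px, Evec, Fin.cons_succ]
      rw [show (fun y => v t y) = (Function.uncurry v ∘ Prod.mk t) from rfl, this]
      rfl

lemma pd_comm (v : Fn) (hv : ContDiff ℝ (⊤ : ℕ∞) (Function.uncurry v)) (α β : Fin 4)
    (t : ℝ) (x : Fin 3 → ℝ) :
    pd α (pd β v) t x = pd β (pd α v) t x := by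
  set W := Function.uncurry v with hWdef
  have hW' : ContDiff ℝ (⊤ : ℕ∞) (fderiv ℝ W) := hv.fderiv_right (by simp)
  have key : ∀ δ : Fin 4, ∀ p : ℝ × (Fin 3 → ℝ),
      Function.uncurry (pd δ v) p = fderiv ℝ W p (Evec δ) := by
    intro δ p
    exact pd_eq_fderiv v hv δ p.1 p.2
  have hsmooth : ∀ δ : Fin 4, ContDiff ℝ (⊤ : ℕ∞) (Function.uncurry (pd δ v)) := by
    intro δ
    have : Function.uncurry (pd δ v) = fun p => fderiv ℝ W p (Evec δ) := funext (key δ)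
    rw [this]
    exact hW'.clm_apply contDiff_const
  have main : ∀ δ ε : Fin 4, pd δ (pd ε v) t x
      = fderiv ℝ (fderiv ℝ W) (t, x) (Evec δ) (Evec ε) := by
    intro δ ε
    have h1 : pd δ (pd ε v) t x = fderiv ℝ (Function.uncurry (pd ε v)) (t, x) (Evec δ) :=
      pd_eq_fderiv (pd ε v) (hsmooth ε) δ t x
    rw [h1, show Function.uncurry (pd ε v) = fun p => fderiv ℝ W p (Evec ε) from funext (key ε)]
    have h2 : HasFDerivAt (fderiv ℝ W) (fderiv ℝ (fderiv ℝ W) (t, x)) (t, x) :=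
      (hW'.differentiable (by simp) (t, x)).hasFDerivAt
    have h3 := ((ContinuousLinearMap.apply ℝ ℝ (Evec ε)).hasFDerivAt.comp (t, x) h2).fderiv
    rw [show (fun p => fderiv ℝ W p (Evec ε))
        = (⇑(ContinuousLinearMap.apply ℝ ℝ (Evec ε)) ∘ fderiv ℝ W) from rfl, h3]
    rfl
  rw [main α β, main β α]
  exact hv.contDiffAt.isSymmSndFDerivAt ((by rw [minSmoothness_of_isRCLikeNormedField]; exact WithTop.coe_le_coe.2 le_top)) (Evec α) (Evec β)

lemma abs_le_sqrt_sum {n : ℕ} (f : Fin n → ℝ) (i : Fin n) :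
    |f i| ≤ Real.sqrt (∑ j, f j ^ 2) := by
  have h : f i ^ 2 ≤ ∑ j, f j ^ 2 :=
    Finset.single_le_sum (fun j _ => sq_nonneg (f j)) (Finset.mem_univ i)
  calc |f i| = Real.sqrt (f i ^ 2) := (Real.sqrt_sq_eq_abs _).symm
    _ ≤ _ := Real.sqrt_le_sqrt h

lemma abs_le_sqrt_sum2 {n m : ℕ} (f : Fin n → Fin m → ℝ) (i : Fin n) (j : Fin m) :
    |f i j| ≤ Real.sqrt (∑ a, ∑ b, f a b ^ 2) := by
  have h1 : f i j ^ 2 ≤ ∑ b, f i b ^ 2 :=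
    Finset.single_le_sum (f := fun b => f i b ^ 2) (fun b _ => sq_nonneg _) (Finset.mem_univ j)
  have h2 : (∑ b, f i b ^ 2) ≤ ∑ a, ∑ b, f a b ^ 2 :=
    Finset.single_le_sum (f := fun a => ∑ b, f a b ^ 2)
      (fun a _ => Finset.sum_nonneg fun b _ => sq_nonneg _) (Finset.mem_univ i)
  calc |f i j| = Real.sqrt (f i j ^ 2) := (Real.sqrt_sq_eq_abs _).symm
    _ ≤ _ := Real.sqrt_le_sqrt (h1.trans h2)

lemma tri_bound (F : Fin 4 → Fin 4 → Fin 4 → ℝ) (X : Fin 4 → ℝ)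
    (hnull : (∑ α, ∑ β, ∑ γ, F α β γ * X α * X β * X γ) = 0)
    (hX : ∀ α, |X α| ≤ 1)
    (P : Fin 4 → ℝ) (S : Fin 4 → Fin 4 → ℝ)
    (A B : ℝ) (R R2' : Fin 4 → ℝ) (R2 : Fin 4 → Fin 4 → ℝ)
    (hP : ∀ γ, P γ = X γ * A + R γ)
    (hS : ∀ α β, S α β = X α * X β * B + X α * R2' β + R2 α β)
    (D1 T1 TD D2 : ℝ)
    (hA : |A| ≤ D1) (hR : ∀ γ, |R γ| ≤ T1)
    (hR2' : ∀ β, |R2' β| ≤ TD) (hR2 : ∀ α β, |R2 α β| ≤ TD)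
    (hSb : ∀ α β, |S α β| ≤ D2) :
    |∑ α, ∑ β, ∑ γ, F α β γ * P γ * S α β|
      ≤ (∑ α, ∑ β, ∑ γ, |F α β γ|) * (T1 * D2 + 2 * (D1 * TD)) := by
  have hD1 : 0 ≤ D1 := (abs_nonneg A).trans hA
  have hT1 : 0 ≤ T1 := (abs_nonneg (R 0)).trans (hR 0)
  have hTD : 0 ≤ TD := (abs_nonneg (R2' 0)).trans (hR2' 0)
  have hD2 : 0 ≤ D2 := (abs_nonneg (S 0 0)).trans (hSb 0 0)
  have hQ : ∀ α β γ, |P γ * S α β - X α * X β * X γ * (A * B)|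
      ≤ T1 * D2 + 2 * (D1 * TD) := by
    intro α β γ
    have e : P γ * S α β - X α * X β * X γ * (A * B)
        = R γ * S α β + (X γ * A) * (X α * R2' β + R2 α β) := by
      rw [hP γ, hS α β]; ring
    rw [e]
    have b1 : |R γ * S α β| ≤ T1 * D2 := by
      rw [abs_mul]; exact mul_le_mul (hR γ) (hSb α β) (abs_nonneg _) hT1
    have binner : |X α * R2' β + R2 α β| ≤ TD + TD := by
      refine (abs_add_le _ _).trans (add_le_add ?_ (hR2 α β))
      rw [abs_mul]
      calc |X α| * |R2' β| ≤ 1 * TD :=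
            mul_le_mul (hX α) (hR2' β) (abs_nonneg _) zero_le_one
        _ = TD := one_mul _
    have b2 : |X γ * A * (X α * R2' β + R2 α β)| ≤ D1 * (TD + TD) := by
      rw [abs_mul, abs_mul]
      have h1 : |X γ| * |A| ≤ 1 * D1 :=
        mul_le_mul (hX γ) hA (abs_nonneg _) zero_le_one
      calc |X γ| * |A| * |X α * R2' β + R2 α β| ≤ (1 * D1) * (TD + TD) :=
            mul_le_mul h1 binner (abs_nonneg _) (by positivity)
        _ = D1 * (TD + TD) := by ring
    calc |R γ * S α β + X γ * A * (X α * R2' β + R2 α β)|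
        ≤ |R γ * S α β| + |X γ * A * (X α * R2' β + R2 α β)| := abs_add_le _ _
      _ ≤ T1 * D2 + D1 * (TD + TD) := add_le_add b1 b2
      _ = T1 * D2 + 2 * (D1 * TD) := by ring
  have e2 : (∑ α, ∑ β, ∑ γ, F α β γ * P γ * S α β)
      = ∑ α, ∑ β, ∑ γ, F α β γ * (P γ * S α β - X α * X β * X γ * (A * B)) := by
    have estep : ∀ α β γ : Fin 4, F α β γ * P γ * S α β
        = F α β γ * (P γ * S α β - X α * X β * X γ * (A * B))
          + (F α β γ * X α * X β * X γ) * (A * B) := by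
      intro α β γ; ring
    calc (∑ α, ∑ β, ∑ γ, F α β γ * P γ * S α β)
        = ∑ α, ∑ β, ∑ γ, (F α β γ * (P γ * S α β - X α * X β * X γ * (A * B))
            + (F α β γ * X α * X β * X γ) * (A * B)) := by
          exact Finset.sum_congr rfl fun α _ => Finset.sum_congr rfl fun β _ =>
            Finset.sum_congr rfl fun γ _ => estep α β γ
      _ = (∑ α, ∑ β, ∑ γ, F α β γ * (P γ * S α β - X α * X β * X γ * (A * B)))
            + (∑ α, ∑ β, ∑ γ, F α β γ * X α * X β * X γ) * (A * B) := by
          simp [Finset.sum_add_distrib, Finset.sum_mul]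
      _ = _ := by rw [hnull]; ring
  rw [e2]
  have habs : |∑ α, ∑ β, ∑ γ, F α β γ * (P γ * S α β - X α * X β * X γ * (A * B))|
      ≤ ∑ α, ∑ β, ∑ γ, |F α β γ| * (T1 * D2 + 2 * (D1 * TD)) := by
    refine (Finset.abs_sum_le_sum_abs _ _).trans (Finset.sum_le_sum fun α _ => ?_)
    refine (Finset.abs_sum_le_sum_abs _ _).trans (Finset.sum_le_sum fun β _ => ?_)
    refine (Finset.abs_sum_le_sum_abs _ _).trans (Finset.sum_le_sum fun γ _ => ?_)
    rw [abs_mul]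
    exact mul_le_mul_of_nonneg_left (hQ α β γ) (abs_nonneg _)
  refine habs.trans (le_of_eq ?_)
  simp [Finset.sum_mul]

lemma bi_bound (F : Fin 4 → Fin 4 → ℝ) (X : Fin 4 → ℝ)
    (hnull : (∑ α, ∑ β, F α β * X α * X β) = 0)
    (hX : ∀ α, |X α| ≤ 1)
    (P Q : Fin 4 → ℝ) (A A' : ℝ) (R R' : Fin 4 → ℝ)
    (hP : ∀ α, P α = X α * A + R α) (hQ : ∀ β, Q β = X β * A' + R' β)
    (D1 T1 D2 T2 : ℝ)
    (hA : |A| ≤ D1) (hR : ∀ α, |R α| ≤ T1)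
    (hA' : |A'| ≤ D2) (hR' : ∀ β, |R' β| ≤ T2)
    (hQb : ∀ β, |Q β| ≤ D2) :
    |∑ α, ∑ β, F α β * P α * Q β|
      ≤ (∑ α, ∑ β, |F α β|) * (T1 * D2 + D1 * T2) := by
  have hD1 : 0 ≤ D1 := (abs_nonneg A).trans hA
  have hT1 : 0 ≤ T1 := (abs_nonneg (R 0)).trans (hR 0)
  have hD2 : 0 ≤ D2 := (abs_nonneg A').trans hA'
  have hT2 : 0 ≤ T2 := (abs_nonneg (R' 0)).trans (hR' 0)
  have hQ2 : ∀ α β, |P α * Q β - X α * X β * (A * A')| ≤ T1 * D2 + D1 * T2 := by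
    intro α β
    have e : P α * Q β - X α * X β * (A * A')
        = R α * Q β + (X α * A) * R' β := by rw [hP α, hQ β]; ring
    rw [e]
    have b1 : |R α * Q β| ≤ T1 * D2 := by
      rw [abs_mul]; exact mul_le_mul (hR α) (hQb β) (abs_nonneg _) hT1
    have b2 : |X α * A * R' β| ≤ D1 * T2 := by
      rw [abs_mul, abs_mul]
      have h1 : |X α| * |A| ≤ 1 * D1 :=
        mul_le_mul (hX α) hA (abs_nonneg _) zero_le_one
      calc |X α| * |A| * |R' β| ≤ (1 * D1) * T2 :=
            mul_le_mul h1 (hR' β) (abs_nonneg _) (by positivity)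
        _ = D1 * T2 := by ring
    exact (abs_add_le _ _).trans (add_le_add b1 b2)
  have e2 : (∑ α, ∑ β, F α β * P α * Q β)
      = ∑ α, ∑ β, F α β * (P α * Q β - X α * X β * (A * A')) := by
    calc (∑ α, ∑ β, F α β * P α * Q β)
        = ∑ α, ∑ β, (F α β * (P α * Q β - X α * X β * (A * A'))
            + (F α β * X α * X β) * (A * A')) := by
          exact Finset.sum_congr rfl fun α _ => Finset.sum_congr rfl fun β _ => by ring
      _ = (∑ α, ∑ β, F α β * (P α * Q β - X α * X β * (A * A')))
            + (∑ α, ∑ β, F α β * X α * X β) * (A * A') := by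
          simp [Finset.sum_add_distrib, Finset.sum_mul]
      _ = _ := by rw [hnull]; ring
  rw [e2]
  have habs : |∑ α, ∑ β, F α β * (P α * Q β - X α * X β * (A * A'))|
      ≤ ∑ α, ∑ β, |F α β| * (T1 * D2 + D1 * T2) := by
    refine (Finset.abs_sum_le_sum_abs _ _).trans (Finset.sum_le_sum fun α _ => ?_)
    refine (Finset.abs_sum_le_sum_abs _ _).trans (Finset.sum_le_sum fun β _ => ?_)
    rw [abs_mul]
    exact mul_le_mul_of_nonneg_left (hQ2 α β) (abs_nonneg _)
  refine habs.trans (le_of_eq ?_)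
  simp [Finset.sum_mul]

/-- the null direction associated with `x` -/
def Xvec (x : Fin 3 → ℝ) : Fin 4 → ℝ := Fin.cons 1 (fun a => -(x a / enorm3 x))

lemma enorm3_sq (x : Fin 3 → ℝ) : enorm3 x ^ 2 = ∑ i, x i ^ 2 :=
  Real.sq_sqrt (Finset.sum_nonneg fun i _ => sq_nonneg _)

lemma enorm3_pos (x : Fin 3 → ℝ) (hx : x ≠ 0) : 0 < enorm3 x := by
  obtain ⟨i, hi⟩ := Function.ne_iff.1 hx
  refine Real.sqrt_pos.2 (Finset.sum_pos' (fun j _ => sq_nonneg _)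
    ⟨i, Finset.mem_univ i, ?_⟩)
  have : x i ≠ 0 := hi
  positivity

lemma Xvec_null (x : Fin 3 → ℝ) (hx : x ≠ 0) :
    Xvec x 0 ^ 2 = Xvec x 1 ^ 2 + Xvec x 2 ^ 2 + Xvec x 3 ^ 2 := by
  have hr : 0 < enorm3 x := enorm3_pos x hx
  have hs : enorm3 x ^ 2 = x 0 ^ 2 + x 1 ^ 2 + x 2 ^ 2 := by
    rw [enorm3_sq, Fin.sum_univ_three]
  have e0 : Xvec x 0 = 1 := rfl
  have e1 : Xvec x 1 = -(x 0 / enorm3 x) := rfl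
  have e2 : Xvec x 2 = -(x 1 / enorm3 x) := rfl
  have e3 : Xvec x 3 = -(x 2 / enorm3 x) := rfl
  rw [e0, e1, e2, e3]
  field_simp
  linarith [hs]

lemma Xvec_abs (x : Fin 3 → ℝ) (hx : x ≠ 0) (α : Fin 4) : |Xvec x α| ≤ 1 := by
  have hr : 0 < enorm3 x := enorm3_pos x hx
  induction α using Fin.cases with
  | zero => simp [Xvec]
  | succ a =>
      have h1 : |x a| ≤ enorm3 x := by
        simpa [enorm3] using abs_le_sqrt_sum (fun i => x i) a
      have hval : Xvec x a.succ = -(x a / enorm3 x) := by simp [Xvec]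
      have : |Xvec x a.succ| = |x a| / enorm3 x := by
        rw [hval, abs_neg, abs_div, abs_of_pos hr]
      rw [this]
      exact (div_le_one hr).2 h1

/-- the tangential remainder vector -/
def Rvec (u : Fn) (t : ℝ) (x : Fin 3 → ℝ) : Fin 4 → ℝ := Fin.cons 0 fun k => Tgood k u t x

@[simp] lemma Rvec_zero (u : Fn) (t : ℝ) (x : Fin 3 → ℝ) : Rvec u t x 0 = 0 := rfl

@[simp] lemma Rvec_succ (u : Fn) (t : ℝ) (x : Fin 3 → ℝ) (k : Fin 3) :
    Rvec u t x k.succ = Tgood k u t x := by simp [Rvec]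

lemma decompP (u : Fn) (t : ℝ) (x : Fin 3 → ℝ) (γ : Fin 4) :
    pd γ u t x = Xvec x γ * pd 0 u t x + Rvec u t x γ := by
  induction γ using Fin.cases with
  | zero => simp [Xvec]
  | succ k =>
      simp only [Xvec, pd, Rvec, Fin.cons_succ, Fin.cons_zero, Tgood]
      ring

lemma decompS (u : Fn) (hu : ContDiff ℝ (⊤ : ℕ∞) (Function.uncurry u)) (t : ℝ) (x : Fin 3 → ℝ)
    (α β : Fin 4) :
    pd α (pd β u) t x
      = Xvec x α * Xvec x β * pd 0 (pd 0 u) t x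
        + Xvec x α * Rvec (pd 0 u) t x β
        + Rvec (pd β u) t x α := by
  have hS0 : ∀ δ : Fin 4, pd 0 (pd δ u) t x
      = Xvec x δ * pd 0 (pd 0 u) t x + Rvec (pd 0 u) t x δ := by
    intro δ
    rw [pd_comm u hu 0 δ t x]
    exact decompP (pd 0 u) t x δ
  induction α using Fin.cases with
  | zero =>
      rw [hS0 β]
      simp [Xvec]
  | succ a =>
      have h1 := decompP (pd β u) t x a.succ
      rw [h1, hS0 β]
      simp only [Rvec_succ]
      ring

end NullFormAux

/-- pointwise estimates for null forms (Lemma 2.3). -/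
theorem null_form_pointwise_estimates
    (F3 : Fin 4 → Fin 4 → Fin 4 → ℝ) (F2 : Fin 4 → Fin 4 → ℝ)
    (h3 : NullC3 F3) (h2 : NullC2 F2) :
    ∃ C > (0:ℝ), ∀ v w w1 w2 : Fn,
      ContDiff ℝ (⊤ : ℕ∞) (Function.uncurry v) → ContDiff ℝ (⊤ : ℕ∞) (Function.uncurry w) →
      ContDiff ℝ (⊤ : ℕ∞) (Function.uncurry w1) → ContDiff ℝ (⊤ : ℕ∞) (Function.uncurry w2) →
      ∀ t x, x ≠ 0 →
        (|∑ α, ∑ β, ∑ γ, F3 α β γ * pd γ w1 t x * pd α (pd β w2) t x|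
          ≤ C * (Tnorm w1 t x * D2norm w2 t x + Dnorm w1 t x * TDnorm w2 t x))
        ∧ (|∑ α, ∑ β, ∑ γ, F3 α β γ * pd α (pd γ w1) t x * pd β w2 t x|
          ≤ C * (TDnorm w1 t x * Dnorm w2 t x + D2norm w1 t x * Tnorm w2 t x))
        ∧ (|∑ α, ∑ β, F2 α β * pd α v t x * pd β w t x|
          ≤ C * (Tnorm v t x * Dnorm w t x + Dnorm v t x * Tnorm w t x)) := by
  have hK3a : (0:ℝ) ≤ ∑ α, ∑ β, ∑ γ, |F3 α β γ| :=
    Finset.sum_nonneg fun _ _ => Finset.sum_nonneg fun _ _ =>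
      Finset.sum_nonneg fun _ _ => abs_nonneg _
  have hK3b : (0:ℝ) ≤ ∑ α, ∑ β, ∑ γ, |F3 α γ β| :=
    Finset.sum_nonneg fun _ _ => Finset.sum_nonneg fun _ _ =>
      Finset.sum_nonneg fun _ _ => abs_nonneg _
  have hK2 : (0:ℝ) ≤ ∑ α, ∑ β, |F2 α β| :=
    Finset.sum_nonneg fun _ _ => Finset.sum_nonneg fun _ _ => abs_nonneg _
  refine ⟨2 * ((∑ α, ∑ β, ∑ γ, |F3 α β γ|) + (∑ α, ∑ β, ∑ γ, |F3 α γ β|)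
      + (∑ α, ∑ β, |F2 α β|)) + 1, by linarith, ?_⟩
  intro v w w1 w2 hv hw hw1 hw2 t x hx
  have hXdef : True := trivial
  have hXnull := Xvec_null x hx
  have hXabs : ∀ α, |Xvec x α| ≤ 1 := Xvec_abs x hx
  -- generic pointwise bounds
  have habsA : ∀ u : Fn, |pd 0 u t x| ≤ Dnorm u t x := fun u => by
    simpa [Dnorm] using abs_le_sqrt_sum (fun α => pd α u t x) 0
  have habsP : ∀ (u : Fn) (γ : Fin 4), |pd γ u t x| ≤ Dnorm u t x := fun u γ => by
    simpa [Dnorm] using abs_le_sqrt_sum (fun α => pd α u t x) γ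
  have habsR : ∀ (u : Fn) (γ : Fin 4), |Rvec u t x γ| ≤ Tnorm u t x := by
    intro u γ
    induction γ using Fin.cases with
    | zero => simp [Tnorm, Real.sqrt_nonneg]
    | succ k =>
        rw [Rvec_succ]
        simpa [Tnorm] using abs_le_sqrt_sum (fun k => Tgood k u t x) k
  have habsR2 : ∀ (u : Fn) (β α : Fin 4), |Rvec (pd β u) t x α| ≤ TDnorm u t x := by
    intro u β α
    induction α using Fin.cases with
    | zero => simp [TDnorm, Real.sqrt_nonneg]
    | succ k =>
        rw [Rvec_succ]
        simpa [TDnorm] using abs_le_sqrt_sum2 (fun k γ => Tgood k (pd γ u) t x) k β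
  have habsS : ∀ (u : Fn) (α β : Fin 4), |pd α (pd β u) t x| ≤ D2norm u t x := by
    intro u α β
    simpa [D2norm] using abs_le_sqrt_sum2 (fun α β => pd α (pd β u) t x) α β
  have hTn : ∀ u : Fn, 0 ≤ Tnorm u t x := fun u => Real.sqrt_nonneg _
  have hDn : ∀ u : Fn, 0 ≤ Dnorm u t x := fun u => Real.sqrt_nonneg _
  have hTDn : ∀ u : Fn, 0 ≤ TDnorm u t x := fun u => Real.sqrt_nonneg _
  have hD2n : ∀ u : Fn, 0 ≤ D2norm u t x := fun u => Real.sqrt_nonneg _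
  refine ⟨?_, ?_, ?_⟩
  · -- first estimate
    have hb := tri_bound F3 (Xvec x) (h3 (Xvec x) hXnull) hXabs
      (fun γ => pd γ w1 t x) (fun α β => pd α (pd β w2) t x)
      (pd 0 w1 t x) (pd 0 (pd 0 w2) t x)
      (Rvec w1 t x) (Rvec (pd 0 w2) t x)
      (fun α β => Rvec (pd β w2) t x α)
      (fun γ => decompP w1 t x γ) (fun α β => decompS w2 hw2 t x α β)
      (Dnorm w1 t x) (Tnorm w1 t x) (TDnorm w2 t x) (D2norm w2 t x)
      (habsA w1) (habsR w1) (habsR2 w2 0) (fun α β => habsR2 w2 β α) (habsS w2)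
    refine hb.trans ?_
    have p1 : 0 ≤ Tnorm w1 t x * D2norm w2 t x := mul_nonneg (hTn w1) (hD2n w2)
    have p2 : 0 ≤ Dnorm w1 t x * TDnorm w2 t x := mul_nonneg (hDn w1) (hTDn w2)
    nlinarith [mul_nonneg hK3b p1, mul_nonneg hK2 p1, mul_nonneg hK3a p1,
      mul_nonneg hK3b p2, mul_nonneg hK2 p2, mul_nonneg hK3a p2]
  · -- second estimate
    have hswap : (∑ α, ∑ β, ∑ γ, F3 α β γ * pd α (pd γ w1) t x * pd β w2 t x)
        = ∑ α, ∑ β, ∑ γ, F3 α γ β * pd γ w2 t x * pd α (pd β w1) t x := by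
      refine Finset.sum_congr rfl fun α _ => ?_
      rw [Finset.sum_comm]
      exact Finset.sum_congr rfl fun c _ => Finset.sum_congr rfl fun b _ => by ring
    have hnull' : (∑ α, ∑ β, ∑ γ, F3 α γ β * Xvec x α * Xvec x β * Xvec x γ) = 0 := by
      have hre : (∑ α, ∑ β, ∑ γ, F3 α γ β * Xvec x α * Xvec x β * Xvec x γ)
          = ∑ α, ∑ β, ∑ γ, F3 α β γ * Xvec x α * Xvec x β * Xvec x γ := by
        refine Finset.sum_congr rfl fun α _ => ?_
        rw [Finset.sum_comm]
        exact Finset.sum_congr rfl fun c _ => Finset.sum_congr rfl fun b _ => by ring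
      rw [hre]
      exact h3 (Xvec x) hXnull
    rw [hswap]
    have hb := tri_bound (fun α β γ => F3 α γ β) (Xvec x) hnull' hXabs
      (fun γ => pd γ w2 t x) (fun α β => pd α (pd β w1) t x)
      (pd 0 w2 t x) (pd 0 (pd 0 w1) t x)
      (Rvec w2 t x) (Rvec (pd 0 w1) t x)
      (fun α β => Rvec (pd β w1) t x α)
      (fun γ => decompP w2 t x γ) (fun α β => decompS w1 hw1 t x α β)
      (Dnorm w2 t x) (Tnorm w2 t x) (TDnorm w1 t x) (D2norm w1 t x)
      (habsA w2) (habsR w2) (habsR2 w1 0) (fun α β => habsR2 w1 β α) (habsS w1)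
    refine hb.trans ?_
    have p1 : 0 ≤ Tnorm w2 t x * D2norm w1 t x := mul_nonneg (hTn w2) (hD2n w1)
    have p2 : 0 ≤ Dnorm w2 t x * TDnorm w1 t x := mul_nonneg (hDn w2) (hTDn w1)
    nlinarith [mul_nonneg hK3a p1, mul_nonneg hK2 p1, mul_nonneg hK3b p1,
      mul_nonneg hK3a p2, mul_nonneg hK2 p2, mul_nonneg hK3b p2]
  · -- third estimate
    have hb := bi_bound F2 (Xvec x) (h2 (Xvec x) hXnull) hXabs
      (fun α => pd α v t x) (fun β => pd β w t x)
      (pd 0 v t x) (pd 0 w t x)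
      (Rvec v t x) (Rvec w t x)
      (fun α => decompP v t x α) (fun β => decompP w t x β)
      (Dnorm v t x) (Tnorm v t x) (Dnorm w t x) (Tnorm w t x)
      (habsA v) (habsR v) (habsA w) (habsR w) (habsP w)
    refine hb.trans ?_
    have p1 : 0 ≤ Tnorm v t x * Dnorm w t x := mul_nonneg (hTn v) (hDn w)
    have p2 : 0 ≤ Dnorm v t x * Tnorm w t x := mul_nonneg (hDn v) (hTn w)
    nlinarith [mul_nonneg hK3a p1, mul_nonneg hK3b p1, mul_nonneg hK2 p1,
      mul_nonneg hK3a p2, mul_nonneg hK3b p2, mul_nonneg hK2 p2]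

end
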